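/- arXiv:2211.04918 — 2 statements merged into one kernel-verified Lean document; each statement's English description precedes it below -/
import Mathlib

section
/- (Davis–Kahan-type projection bound) Let Σ and Σ̂ be p×p real symmetric matrices with eigenvalues λ₁ ≥ … ≥ λ_p and λ̂₁ ≥ … ≥ λ̂_p respectively, and suppose λ_k > λ_{k+1} = 0 (i.e., Σ has rank k). Let P and P̂ be the orthogonal projections onto the span of the top-k eigenvectors of Σ and Σ̂ respectively. Then ‖P̂ − P‖² ≤ 4k‖Σ̂ − Σ‖²/λ_k². -/
/-!
Let `P`, `Q` be the projections onto the top `k` eigenvectors of `S`, `Sh`, and put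
`ε = ‖Sh - S‖`, `δ = λ_k - λ_{k+1}`. A dimension count gives Weyl's inequality: the top `k`
eigenvalues of `Sh` are at least `λ_k - ε`, the others at most `λ_{k+1} + ε`. If `v` is a unit
eigenvector of one matrix with eigenvalue `μ`, and the eigenvalues discarded by the projection `R`
of the other one are at most `β`, then pairing the perturbation with `v - R v` gives
`(μ - β) ‖v - R v‖ ≤ ε`. Summing over the top eigenvectors bounds `‖(1 - P) Q‖` and `‖(1 - Q) P‖`
by `√k ε / (δ - ε)`; as `(Q - P) x = (1 - P) Q x - P (1 - Q) x` is an orthogonal decomposition,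
`‖Q - P‖` obeys the same bound. When `2 ε ≥ δ` the trivial bound `‖Q - P‖ ≤ 1` suffices.
-/

open Matrix

/-- The ℓ²→ℓ² operator norm of a real matrix. -/
noncomputable def opNorm {m n : ℕ} (A : Matrix (Fin m) (Fin n) ℝ) : ℝ :=
  ‖LinearMap.toContinuousLinearMap (Matrix.toEuclideanLin A)‖

open InnerProductSpace
open scoped Finset RealInnerProductSpace

variable {E : Type*} [NormedAddCommGroup E] [InnerProductSpace ℝ E]

namespace IsStarProjection

variable [CompleteSpace E] {P Q : E →L[ℝ] E}

theorem inner_apply_one_sub_apply (hP : IsStarProjection P) (x y : E) :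
    ⟪P x, (1 - P) y⟫ = 0 := by
  have h : ⟪P x, (1 - P) y⟫ = ⟪x, P ((1 - P) y)⟫ := hP.isSelfAdjoint.isSymmetric x _
  rw [h, ← mul_apply_eq_comp, mul_sub, mul_one, hP.isIdempotentElem.eq, sub_self, _root_.zero_apply,
    inner_zero_right]

theorem norm_sub_le (hP : IsStarProjection P) (hQ : IsStarProjection Q) {T : ℝ}
    (h₁ : ‖(1 - P) * Q‖ ≤ T) (h₂ : ‖(1 - Q) * P‖ ≤ T) : ‖Q - P‖ ≤ T := by
  have hT : 0 ≤ T := (norm_nonneg _).trans h₁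
  have h₂' : ‖P * (1 - Q)‖ ≤ T := by
    rwa [← norm_star, star_mul, star_sub, star_one, hP.isSelfAdjoint.star_eq,
      hQ.isSelfAdjoint.star_eq]
  refine ContinuousLinearMap.opNorm_le_bound _ hT fun x => ?_
  have hsplit : (Q - P) x = (1 - P) (Q x) - P ((1 - Q) x) := by
    rw [← mul_apply_eq_comp, ← mul_apply_eq_comp, ← _root_.sub_apply]
    congr 1
    noncomm_ring
  have hy : ‖(1 - P) (Q x)‖ ≤ T * ‖Q x‖ := by
    have h := ((1 - P) * Q).le_of_opNorm_le h₁ (Q x)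
    rwa [mul_apply_eq_comp, ← mul_apply_eq_comp Q, hQ.isIdempotentElem.eq] at h
  have hz : ‖P ((1 - Q) x)‖ ≤ T * ‖(1 - Q) x‖ := by
    have h := (P * (1 - Q)).le_of_opNorm_le h₂' ((1 - Q) x)
    rwa [mul_apply_eq_comp, ← mul_apply_eq_comp (1 - Q), hQ.one_sub.isIdempotentElem.eq] at h
  have hpyth : ‖Q x‖ ^ 2 + ‖(1 - Q) x‖ ^ 2 = ‖x‖ ^ 2 := by
    have h := norm_add_sq_eq_norm_sq_add_norm_sq_real (hQ.inner_apply_one_sub_apply x x)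
    rw [_root_.sub_apply, one_apply_eq_self, add_sub_cancel] at h
    rw [sq, sq, sq, h, _root_.sub_apply, one_apply_eq_self]
  have horth : ‖(Q - P) x‖ ^ 2 = ‖(1 - P) (Q x)‖ ^ 2 + ‖P ((1 - Q) x)‖ ^ 2 := by
    rw [hsplit, sq, sq, sq, norm_sub_sq_eq_norm_sq_add_norm_sq_real]
    rw [real_inner_comm]
    exact hP.inner_apply_one_sub_apply _ _
  refine (sq_le_sq₀ (norm_nonneg _) (by positivity)).mp ?_
  rw [horth, mul_pow, ← hpyth, mul_add, ← mul_pow, ← mul_pow]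
  gcongr

theorem sub_mul_norm_sub_apply_le {A B : E →L[ℝ] E} (hP : IsStarProjection P) (hBP : Commute B P)
    {β μ : ℝ} (hB : ∀ w, P w = 0 → ⟪B w, w⟫ ≤ β * ‖w‖ ^ 2) {v : E} (hv : A v = μ • v) :
    (μ - β) * ‖v - P v‖ ≤ ‖A - B‖ * ‖v‖ := by
  set w := v - P v
  have hw : (1 - P) v = w := by rw [_root_.sub_apply, one_apply_eq_self]
  have hPw : P w = 0 := by
    rw [map_sub, ← mul_apply_eq_comp, hP.isIdempotentElem.eq, sub_self]
  have hvw : ⟪v, w⟫ = ‖w‖ ^ 2 := by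
    rw [← sub_add_cancel v (P v), inner_add_left, ← hw, hP.inner_apply_one_sub_apply, add_zero,
      hw, real_inner_self_eq_norm_sq]
  have hBvw : ⟪B v, w⟫ = ⟪B w, w⟫ := by
    rw [map_sub, inner_sub_left, ← mul_apply_eq_comp, hBP.eq, mul_apply_eq_comp, ← hw,
      hP.inner_apply_one_sub_apply, sub_zero]
  have hlower : (μ - β) * ‖w‖ ^ 2 ≤ ⟪(A - B) v, w⟫ := by
    rw [_root_.sub_apply, inner_sub_left, hv, real_inner_smul_left, hvw, hBvw]
    linarith [hB w hPw]
  have hupper : ⟪(A - B) v, w⟫ ≤ ‖A - B‖ * ‖v‖ * ‖w‖ :=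
    (real_inner_le_norm _ _).trans
      (mul_le_mul_of_nonneg_right ((A - B).le_opNorm v) (norm_nonneg w))
  rcases (norm_nonneg w).eq_or_lt with hw0 | hw0
  · rw [← hw0, mul_zero]
    positivity
  · exact le_of_mul_le_mul_right (by nlinarith) hw0

end IsStarProjection

namespace OrthonormalBasis

section Fintype

variable {ι : Type*} [Fintype ι] (b : OrthonormalBasis ι ℝ E) (d e : ι → ℝ)

lemma finrank_span_image (s : Finset ι) :
    Module.finrank ℝ (Submodule.span ℝ (b '' s)) = #s := by
  have hli : LinearIndependent ℝ (fun i : (s : Set ι) => b i) :=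
    b.orthonormal.linearIndependent.comp _ Subtype.val_injective
  rw [Set.image_eq_range, finrank_span_eq_card hli]
  simp

lemma inner_eq_zero_of_mem_span_image {s : Set ι} {u : E} (hu : u ∈ Submodule.span ℝ (b '' s))
    {j : ι} (hj : j ∉ s) : ⟪b j, u⟫ = 0 := by
  obtain ⟨l, hl, rfl⟩ := (Finsupp.mem_span_image_iff_linearCombination ℝ).mp hu
  rw [real_inner_comm]
  exact b.orthonormal.inner_finsupp_eq_zero hj hl

noncomputable def spectralOp : E →L[ℝ] E :=
  ∑ i, d i • rankOne ℝ (b i) (b i)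

lemma spectralOp_apply (x : E) : b.spectralOp d x = ∑ i, (d i * ⟪b i, x⟫) • b i := by
  simp [spectralOp, mul_smul]

lemma inner_spectralOp_apply (j : ι) (x : E) : ⟪b j, b.spectralOp d x⟫ = d j * ⟪b j, x⟫ := by
  classical
  simp [spectralOp_apply, inner_sum, inner_smul_right, orthonormal_iff_ite.mp b.orthonormal]

lemma spectralOp_self (j : ι) : b.spectralOp d (b j) = d j • b j := by
  classical
  simp [spectralOp_apply, orthonormal_iff_ite.mp b.orthonormal]

lemma spectralOp_mul : b.spectralOp d * b.spectralOp e = b.spectralOp (d * e) := by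
  ext x
  simp only [mul_apply_eq_comp, spectralOp_apply b d, inner_spectralOp_apply,
    spectralOp_apply b (d * e), Pi.mul_apply, mul_assoc]

lemma isSelfAdjoint_spectralOp [CompleteSpace E] : IsSelfAdjoint (b.spectralOp d) := by
  rw [ContinuousLinearMap.isSelfAdjoint_iff_isSymmetric]
  intro x y
  simp only [ContinuousLinearMap.coe_coe, spectralOp_apply, sum_inner, inner_sum,
    real_inner_smul_left, real_inner_smul_right]
  exact Finset.sum_congr rfl fun i _ => by rw [real_inner_comm x]; ring

lemma isStarProjection_spectralOp_indicator [CompleteSpace E] (s : Set ι) :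
    IsStarProjection (b.spectralOp (s.indicator 1)) := by
  refine ⟨?_, b.isSelfAdjoint_spectralOp _⟩
  rw [IsIdempotentElem, spectralOp_mul]
  congr 1
  ext i
  by_cases hi : i ∈ s <;> simp [hi]

lemma spectralOp_indicator_apply (s : Finset ι) (x : E) :
    b.spectralOp (Set.indicator ↑s 1) x = ∑ i ∈ s, ⟪b i, x⟫ • b i := by
  classical
  simp [spectralOp_apply, Set.indicator_apply, ite_smul, Finset.sum_ite_mem]

lemma norm_mul_spectralOp_indicator_le (R : E →L[ℝ] E) (s : Finset ι) {τ : ℝ} (hτ : 0 ≤ τ)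
    (hR : ∀ i ∈ s, ‖R (b i)‖ ≤ τ) :
    ‖R * b.spectralOp (Set.indicator ↑s 1)‖ ≤ √(#s) * τ := by
  refine ContinuousLinearMap.opNorm_le_bound _ (by positivity) fun x => ?_
  rw [mul_apply_eq_comp, spectralOp_indicator_apply, map_sum]
  calc ‖∑ i ∈ s, R (⟪b i, x⟫ • b i)‖
      ≤ ∑ i ∈ s, |⟪b i, x⟫| * τ := by
        refine (norm_sum_le _ _).trans (Finset.sum_le_sum fun i hi => ?_)
        rw [map_smul, norm_smul, Real.norm_eq_abs]
        exact mul_le_mul_of_nonneg_left (hR i hi) (abs_nonneg _)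
    _ = τ * ∑ i ∈ s, 1 * |⟪b i, x⟫| := by simp [Finset.mul_sum, mul_comm]
    _ ≤ τ * (√(#s) * √(∑ i ∈ s, |⟪b i, x⟫| ^ 2)) := by
        gcongr
        simpa using Real.sum_mul_le_sqrt_mul_sqrt s (fun _ => (1 : ℝ)) (fun i => |⟪b i, x⟫|)
    _ ≤ τ * (√(#s) * ‖x‖) := by
        gcongr
        rw [← Real.sqrt_sq (norm_nonneg x), ← b.sum_sq_inner_right]
        gcongr
        simp only [sq_abs]
        exact Finset.sum_le_univ_sum_of_nonneg fun i => sq_nonneg _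
    _ = √(#s) * τ * ‖x‖ := by ring

lemma inner_spectralOp_self (x : E) : ⟪b.spectralOp d x, x⟫ = ∑ i, d i * ⟪b i, x⟫ ^ 2 := by
  simp only [spectralOp_apply, sum_inner, real_inner_smul_left]
  exact Finset.sum_congr rfl fun i _ => by rw [real_inner_comm]; ring

lemma inner_spectralOp_self_le {x : E} {β : ℝ} (h : ∀ i, ⟪b i, x⟫ ≠ 0 → d i ≤ β) :
    ⟪b.spectralOp d x, x⟫ ≤ β * ‖x‖ ^ 2 := by
  rw [inner_spectralOp_self, ← b.sum_sq_inner_right, Finset.mul_sum]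
  refine Finset.sum_le_sum fun i _ => ?_
  by_cases hi : ⟪b i, x⟫ = 0
  · simp [hi]
  · exact mul_le_mul_of_nonneg_right (h i hi) (sq_nonneg _)

lemma le_inner_spectralOp_self {x : E} {β : ℝ} (h : ∀ i, ⟪b i, x⟫ ≠ 0 → β ≤ d i) :
    β * ‖x‖ ^ 2 ≤ ⟪b.spectralOp d x, x⟫ := by
  rw [inner_spectralOp_self, ← b.sum_sq_inner_right, Finset.mul_sum]
  refine Finset.sum_le_sum fun i _ => ?_
  by_cases hi : ⟪b i, x⟫ = 0
  · simp [hi]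
  · exact mul_le_mul_of_nonneg_right (h i hi) (sq_nonneg _)

end Fintype

variable {n : ℕ} (b b' : OrthonormalBasis (Fin n) ℝ E) {d d' : Fin n → ℝ}

lemma exists_ne_zero_inner_eq_zero (r : Fin n) :
    ∃ u ≠ 0, (∀ j, r < j → ⟪b' j, u⟫ = 0) ∧ ∀ j < r, ⟪b j, u⟫ = 0 := by
  have := Module.Finite.of_basis b.toBasis
  set U := Submodule.span ℝ (b' '' ↑(Finset.Iic r))
  set W := Submodule.span ℝ (b '' ↑(Finset.Ici r))
  have hdim := Submodule.finrank_sup_add_finrank_inf_eq U W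
  have hle := Submodule.finrank_le (U ⊔ W)
  rw [b'.finrank_span_image, b.finrank_span_image, Fin.card_Iic, Fin.card_Ici] at hdim
  rw [Module.finrank_eq_card_basis b.toBasis, Fintype.card_fin] at hle
  obtain ⟨⟨u, huU, huW⟩, hu⟩ :=
    Module.finrank_pos_iff_exists_ne_zero.mp (show 0 < Module.finrank ℝ ↥(U ⊓ W) by omega)
  refine ⟨u, fun h => hu (Subtype.ext h), fun j hj => ?_, fun j hj => ?_⟩
  · exact b'.inner_eq_zero_of_mem_span_image huU (by simpa using hj)
  · exact b.inner_eq_zero_of_mem_span_image huW (by simpa using hj)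

/-- Weyl's inequality. -/
theorem le_add_norm_spectralOp_sub (hd : Antitone d) (hd' : Antitone d') (r : Fin n) :
    d' r ≤ d r + ‖b'.spectralOp d' - b.spectralOp d‖ := by
  obtain ⟨u, hu0, hu', hu⟩ := b.exists_ne_zero_inner_eq_zero b' r
  have hlow : d' r * ‖u‖ ^ 2 ≤ ⟪b'.spectralOp d' u, u⟫ :=
    b'.le_inner_spectralOp_self d' fun j hj => hd' (not_lt.mp fun h => hj (hu' j h))
  have hup : ⟪b.spectralOp d u, u⟫ ≤ d r * ‖u‖ ^ 2 :=
    b.inner_spectralOp_self_le d fun j hj => hd (not_lt.mp fun h => hj (hu j h))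
  have hpert : ⟪(b'.spectralOp d' - b.spectralOp d) u, u⟫
      ≤ ‖b'.spectralOp d' - b.spectralOp d‖ * ‖u‖ ^ 2 :=
    calc _ ≤ ‖(b'.spectralOp d' - b.spectralOp d) u‖ * ‖u‖ := real_inner_le_norm _ _
      _ ≤ _ := by
        rw [sq, ← mul_assoc]
        exact mul_le_mul_of_nonneg_right (ContinuousLinearMap.le_opNorm _ _) (norm_nonneg u)
  rw [_root_.sub_apply, inner_sub_left] at hpert
  refine le_of_mul_le_mul_right ?_ (by positivity : 0 < ‖u‖ ^ 2)
  linarith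

theorem sub_mul_norm_sub_spectralOp_indicator_le (hd' : Antitone d') (k j : Fin n) :
    (d j - d' k) * ‖b j - b'.spectralOp ((Set.Iio k).indicator 1) (b j)‖
      ≤ ‖b.spectralOp d - b'.spectralOp d'‖ := by
  have := Module.Finite.of_basis b.toBasis
  have := FiniteDimensional.complete ℝ E
  have hB : ∀ w, b'.spectralOp ((Set.Iio k).indicator 1) w = 0 →
      ⟪b'.spectralOp d' w, w⟫ ≤ d' k * ‖w‖ ^ 2 := by
    intro w hw
    refine b'.inner_spectralOp_self_le d' fun i hi => hd' (not_lt.mp fun hik => hi ?_)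
    simpa [Set.indicator_apply, hik, hw, eq_comm] using
      b'.inner_spectralOp_apply ((Set.Iio k).indicator 1) i w
  have hcomm : Commute (b'.spectralOp d') (b'.spectralOp ((Set.Iio k).indicator 1)) := by
    rw [Commute, SemiconjBy, spectralOp_mul, spectralOp_mul, mul_comm]
  simpa [b.orthonormal.1 j] using
    (b'.isStarProjection_spectralOp_indicator _).sub_mul_norm_sub_apply_le hcomm hB
      (b.spectralOp_self d j)

theorem norm_one_sub_mul_spectralOp_indicator_le (hd' : Antitone d') (k : Fin n) {c : ℝ}
    (hc : 0 < c) (hgap : ∀ j < k, c ≤ d j - d' k) :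
    ‖(1 - b'.spectralOp ((Set.Iio k).indicator 1)) * b.spectralOp ((Set.Iio k).indicator 1)‖
      ≤ √(k : ℕ) * (‖b.spectralOp d - b'.spectralOp d'‖ / c) := by
  have h := b.norm_mul_spectralOp_indicator_le (1 - b'.spectralOp ((Set.Iio k).indicator 1))
    (Finset.Iio k) (τ := ‖b.spectralOp d - b'.spectralOp d'‖ / c) (by positivity) fun j hj => by
      rw [_root_.sub_apply, one_apply_eq_self, le_div_iff₀ hc, mul_comm]
      exact (mul_le_mul_of_nonneg_right (hgap j (Finset.mem_Iio.mp hj)) (norm_nonneg _)).trans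
        (b.sub_mul_norm_sub_spectralOp_indicator_le b' hd' k j)
  rwa [Finset.coe_Iio, Fin.card_Iio] at h

theorem norm_spectralOp_indicator_sub_le {k : ℕ} (hkn : k < n) (hd : Antitone d)
    (hd' : Antitone d') (hgap : d ⟨k, hkn⟩ < d ⟨k - 1, Nat.sub_lt_of_lt hkn⟩) :
    ‖b'.spectralOp ((Set.Iio ⟨k, hkn⟩).indicator 1)
        - b.spectralOp ((Set.Iio ⟨k, hkn⟩).indicator 1)‖
      ≤ 2 * √k * ‖b'.spectralOp d' - b.spectralOp d‖
        / (d ⟨k - 1, Nat.sub_lt_of_lt hkn⟩ - d ⟨k, hkn⟩) := by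
  have := Module.Finite.of_basis b.toBasis
  have := FiniteDimensional.complete ℝ E
  set m : Fin n := ⟨k - 1, Nat.sub_lt_of_lt hkn⟩
  set P := b.spectralOp ((Set.Iio ⟨k, hkn⟩).indicator 1)
  set Q := b'.spectralOp ((Set.Iio ⟨k, hkn⟩).indicator 1)
  set ε := ‖b'.spectralOp d' - b.spectralOp d‖
  set δ := d m - d ⟨k, hkn⟩
  have hδ : 0 < δ := sub_pos.mpr hgap
  have hsqrt : 1 ≤ √k := by
    refine Real.one_le_sqrt.mpr (Nat.one_le_cast.mpr (Nat.pos_of_ne_zero fun hk0 => ?_))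
    subst hk0
    exact lt_irrefl _ hgap
  have hP := b.isStarProjection_spectralOp_indicator (Set.Iio ⟨k, hkn⟩)
  have hQ := b'.isStarProjection_spectralOp_indicator (Set.Iio ⟨k, hkn⟩)
  rcases le_or_gt δ (2 * ε) with hbig | hsmall
  · have hle_one : ∀ {R T : E →L[ℝ] E}, IsStarProjection R → IsStarProjection T →
        ‖(1 - R) * T‖ ≤ 1 := fun hR hT =>
      (norm_mul_le _ _).trans (mul_le_one₀ hR.one_sub.norm_le (norm_nonneg _) hT.norm_le)
    calc ‖Q - P‖ ≤ 1 := hP.norm_sub_le hQ (hle_one hP hQ) (hle_one hQ hP)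
      _ ≤ 2 * √k * ε / δ := by
        rw [le_div_iff₀ hδ]
        nlinarith [norm_nonneg (b'.spectralOp d' - b.spectralOp d)]
  · have hweyl₁ := b'.le_add_norm_spectralOp_sub b hd' hd m
    have hweyl₂ := b.le_add_norm_spectralOp_sub b' hd hd' ⟨k, hkn⟩
    rw [norm_sub_rev] at hweyl₁
    have htop : ∀ j < (⟨k, hkn⟩ : Fin n), j ≤ m := fun j hj =>
      Fin.le_def.mpr (by rw [Fin.lt_def] at hj; dsimp only [m] at hj ⊢; omega)
    have h₁ : ‖(1 - P) * Q‖ ≤ √k * (ε / (δ / 2)) :=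
      b'.norm_one_sub_mul_spectralOp_indicator_le b hd ⟨k, hkn⟩ (by positivity)
        fun j hj => by linarith [hd' (htop j hj)]
    have h₂ : ‖(1 - Q) * P‖ ≤ √k * (ε / (δ / 2)) := by
      have h : ‖(1 - Q) * P‖ ≤ √k * (‖b.spectralOp d - b'.spectralOp d'‖ / (δ / 2)) :=
        b.norm_one_sub_mul_spectralOp_indicator_le b' hd' ⟨k, hkn⟩ (by positivity)
          fun j hj => by linarith [hd (htop j hj)]
      rwa [norm_sub_rev] at h
    calc ‖Q - P‖ ≤ √k * (ε / (δ / 2)) := hP.norm_sub_le hQ h₁ h₂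
      _ = 2 * √k * ε / δ := by field_simp

end OrthonormalBasis

namespace Matrix

variable {ι : Type*} [Fintype ι] [DecidableEq ι]

lemma orthonormal_toLp_transpose {V : Matrix ι ι ℝ} (hV : Vᵀ * V = 1) :
    Orthonormal ℝ fun j => WithLp.toLp 2 (Vᵀ j) := by
  rw [orthonormal_iff_ite]
  intro i j
  rw [EuclideanSpace.inner_toLp_toLp, ← one_apply, ← hV, mul_apply]
  simp [dotProduct, mul_comm]

noncomputable def columnsOrthonormalBasis {V : Matrix ι ι ℝ} (hV : Vᵀ * V = 1) :
    OrthonormalBasis ι ℝ (EuclideanSpace ℝ ι) :=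
  .mk (orthonormal_toLp_transpose hV)
    ((orthonormal_toLp_transpose hV).linearIndependent.span_eq_top_of_card_eq_finrank'
      (by simp)).ge

lemma columnsOrthonormalBasis_apply {V : Matrix ι ι ℝ} (hV : Vᵀ * V = 1) (j : ι) :
    columnsOrthonormalBasis hV j = WithLp.toLp 2 (Vᵀ j) := by
  simp [columnsOrthonormalBasis]

lemma toEuclideanCLM_mul_diagonal_mul_transpose {V : Matrix ι ι ℝ} (hV : Vᵀ * V = 1)
    (d : ι → ℝ) :
    toEuclideanCLM (𝕜 := ℝ) (V * diagonal d * Vᵀ) = (columnsOrthonormalBasis hV).spectralOp d := by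
  ext x : 1
  apply WithLp.ofLp_injective
  rw [ofLp_toEuclideanCLM, OrthonormalBasis.spectralOp_apply, WithLp.ofLp_sum, ← mulVec_mulVec,
    ← mulVec_mulVec, mulVec_eq_sum]
  refine Finset.sum_congr rfl fun j _ => ?_
  rw [columnsOrthonormalBasis_apply, EuclideanSpace.inner_toLp_toLp, mulVec_diagonal,
    op_smul_eq_smul, WithLp.ofLp_smul, star_trivial, mulVec, dotProduct_comm]

lemma of_castLE_mul_transpose {p k : ℕ} (hkp : k < p) (V : Matrix (Fin p) (Fin p) ℝ) :
    (of fun i (j : Fin k) => V i (Fin.castLE hkp.le j)) *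
        (of fun i (j : Fin k) => V i (Fin.castLE hkp.le j))ᵀ
      = V * diagonal ((Set.Iio ⟨k, hkp⟩).indicator 1) * Vᵀ := by
  have himage : Finset.univ.map (Fin.castLEEmb hkp.le) = Finset.Iio ⟨k, hkp⟩ := by
    ext j
    simp only [Finset.mem_map, Finset.mem_univ, true_and, Fin.castLEEmb_apply, Finset.mem_Iio,
      Fin.lt_def]
    exact ⟨fun ⟨a, ha⟩ => ha ▸ a.isLt, fun h => ⟨⟨j, h⟩, rfl⟩⟩
  ext i l
  rw [mul_apply, mul_apply, ← Finset.coe_Iio]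
  simp only [mul_diagonal, of_apply, transpose_apply, Set.indicator_apply, Finset.mem_coe,
    Pi.one_apply, mul_ite, ite_mul, mul_one, mul_zero, zero_mul]
  rw [Finset.sum_ite_mem, Finset.univ_inter, ← himage, Finset.sum_map]
  rfl

end Matrix

lemma opNorm_eq_norm_toEuclideanCLM {p : ℕ} (A : Matrix (Fin p) (Fin p) ℝ) :
    opNorm A = ‖toEuclideanCLM (𝕜 := ℝ) A‖ :=
  rfl

/-- Davis–Kahan-type projection bound. Let `S` and `Sh` be symmetric `p × p` matrices
with eigendecompositions `S = V diag(λ) Vᵀ` and `Sh = V̂ diag(λ̂) V̂ᵀ` where the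
eigenvalues `λ₁ ≥ … ≥ λ_p` and `λ̂₁ ≥ … ≥ λ̂_p` are sorted in descending order.
Suppose `λ_k > λ_{k+1} = 0` (so `S` has rank `k`).  If `P` and `P̂` are the orthogonal
projections onto the spans of the top-`k` eigenvectors of `S` and `Sh`, then
`‖P̂ - P‖² ≤ 4 k ‖Sh - S‖² / λ_k²`. -/
theorem davis_kahan_projection_bound {p k : ℕ} (hkp : k < p)
    (S Sh V Vh : Matrix (Fin p) (Fin p) ℝ) (lam lamh : Fin p → ℝ)
    (hV : Vᵀ * V = 1) (hVh : Vhᵀ * Vh = 1)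
    (hlam : Antitone lam) (hlamh : Antitone lamh)
    (hS : S = V * Matrix.diagonal lam * Vᵀ)
    (hSh : Sh = Vh * Matrix.diagonal lamh * Vhᵀ)
    (hgap : 0 < lam ⟨k - 1, by omega⟩) (hzero : lam ⟨k, hkp⟩ = 0)
    (Vk Vhk : Matrix (Fin p) (Fin k) ℝ)
    (hVk : Vk = Matrix.of fun i (j : Fin k) => V i (Fin.castLE hkp.le j))
    (hVhk : Vhk = Matrix.of fun i (j : Fin k) => Vh i (Fin.castLE hkp.le j)) :
    (opNorm (Vhk * Vhkᵀ - Vk * Vkᵀ)) ^ 2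
      ≤ 4 * k * (opNorm (Sh - S)) ^ 2 / (lam ⟨k - 1, by omega⟩) ^ 2 := by
  have hbound : opNorm (Vhk * Vhkᵀ - Vk * Vkᵀ)
      ≤ 2 * √k * opNorm (Sh - S) / lam ⟨k - 1, by omega⟩ := by
    simpa only [opNorm_eq_norm_toEuclideanCLM, map_sub, hVk, hVhk, hS, hSh,
      of_castLE_mul_transpose hkp, toEuclideanCLM_mul_diagonal_mul_transpose hV,
      toEuclideanCLM_mul_diagonal_mul_transpose hVh, hzero, sub_zero] using
      (columnsOrthonormalBasis hV).norm_spectralOp_indicator_sub_le (columnsOrthonormalBasis hVh)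
        hkp hlam hlamh (hzero ▸ hgap)
  calc opNorm (Vhk * Vhkᵀ - Vk * Vkᵀ) ^ 2
      ≤ (2 * √k * opNorm (Sh - S) / lam ⟨k - 1, by omega⟩) ^ 2 :=
        pow_le_pow_left₀ (norm_nonneg _) hbound 2
    _ = 4 * k * opNorm (Sh - S) ^ 2 / lam ⟨k - 1, by omega⟩ ^ 2 := by
        rw [div_pow, mul_pow, mul_pow, Real.sq_sqrt k.cast_nonneg]
        ring
end

section
/- Let C be an n×n symmetric matrix with entries C(i,j) = c(i−j) where |c(t)| ≤ K·(1+|t|)^{2H−2} for some constant K and H ∈ (1/2, 1). Then the operator norm satisfies ‖C‖ ≤ K'·n^{(2H−1)∨(1/2)}·(1 + log(n)·1_{H=3/4}) for some constant K' depending only on K and H. -/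
open Matrix

/-!
By Schur's test (row-wise Cauchy–Schwarz with weights `|A i j|`), the ℓ² operator norm of a matrix
is at most the geometric mean of its maximal absolute row and column sums. For a Toeplitz matrix
with `|c t| ≤ K (1 + |t|) ^ (2H - 2)` each such sum is at most
`2K ∑_{t<n} (t+1) ^ (2H-2) ≤ 2K n ^ (2H-1) / (2H-1)`, by telescoping the concavity bound
`p t ^ (p-1) ≤ t ^ p - (t-1) ^ p`. Since `n ^ (2H-1) ≤ n ^ ((2H-1) ∨ 1/2)`, this already gives the
claimed bound, without the logarithm.
-/

open Finset

theorem sum_sq_mulVec_le_of_sum_abs_le {m n : Type*} [Fintype m] [Fintype n] (A : Matrix m n ℝ)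
    {r s : ℝ} (hr₀ : 0 ≤ r) (hr : ∀ i, ∑ j, |A i j| ≤ r) (hs : ∀ j, ∑ i, |A i j| ≤ s) (x : n → ℝ) :
    ∑ i, (A *ᵥ x) i ^ 2 ≤ r * s * ∑ j, x j ^ 2 := by
  have row : ∀ i, (A *ᵥ x) i ^ 2 ≤ r * ∑ j, |A i j| * x j ^ 2 := fun i => by
    have cs : (∑ j, |A i j| * |x j|) ^ 2 ≤ (∑ j, |A i j|) * ∑ j, |A i j| * x j ^ 2 :=
      sum_sq_le_sum_mul_sum_of_sq_le_mul _ (fun j _ => abs_nonneg _) (fun j _ => by positivity)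
        fun j _ => le_of_eq <| by rw [mul_pow, sq_abs (x j), ← mul_assoc, sq, abs_mul_abs_self]
    calc (A *ᵥ x) i ^ 2 ≤ (∑ j, |A i j| * |x j|) ^ 2 := by
          rw [← sq_abs]
          gcongr
          simpa only [mulVec, dotProduct, abs_mul] using
            abs_sum_le_sum_abs (fun j => A i j * x j) univ
      _ ≤ r * ∑ j, |A i j| * x j ^ 2 := cs.trans (by gcongr; exact hr i)
  calc ∑ i, (A *ᵥ x) i ^ 2 ≤ ∑ i, r * ∑ j, |A i j| * x j ^ 2 := sum_le_sum fun i _ => row i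
    _ = r * ∑ j, (∑ i, |A i j|) * x j ^ 2 := by
          rw [← mul_sum, sum_comm]; simp only [sum_mul]
    _ ≤ r * ∑ j, s * x j ^ 2 := by gcongr with j; exact hs j
    _ = r * s * ∑ j, x j ^ 2 := by rw [← mul_sum, mul_assoc]

theorem opNorm_le_sqrt_of_sum_abs_le {m n : ℕ} (A : Matrix (Fin m) (Fin n) ℝ) {r s : ℝ}
    (hr₀ : 0 ≤ r) (hr : ∀ i, ∑ j, |A i j| ≤ r) (hs : ∀ j, ∑ i, |A i j| ≤ s) :
    opNorm A ≤ √(r * s) := by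
  refine ContinuousLinearMap.opNorm_le_bound _ (Real.sqrt_nonneg _) fun x => ?_
  rw [← Real.sqrt_sq (norm_nonneg _), ← Real.sqrt_sq (norm_nonneg x),
    ← Real.sqrt_mul' _ (sq_nonneg _)]
  gcongr
  rw [EuclideanSpace.real_norm_sq_eq, EuclideanSpace.real_norm_sq_eq]
  exact sum_sq_mulVec_le_of_sum_abs_le A hr₀ hr hs x

theorem Real.mul_rpow_sub_one_le_rpow_sub_rpow {p t : ℝ} (hp₀ : 0 ≤ p) (hp₁ : p ≤ 1) (ht : 1 ≤ t) :
    p * t ^ (p - 1) ≤ t ^ p - (t - 1) ^ p := by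
  have ht₀ : 0 < t := by linarith
  have bernoulli := rpow_one_add_le_one_add_mul_self (s := -t⁻¹)
    (by linarith [inv_le_one_of_one_le₀ ht]) hp₀ hp₁
  rw [show 1 + -t⁻¹ = (t - 1) / t by field_simp; ring, div_rpow (by linarith) ht₀.le,
    div_le_iff₀ (by positivity)] at bernoulli
  rw [rpow_sub_one ht₀.ne']
  have : (1 + p * -t⁻¹) * t ^ p = t ^ p - p * (t ^ p / t) := by field_simp; ring
  linarith

theorem Real.sum_range_add_one_rpow_sub_one_le {p : ℝ} (hp₀ : 0 < p) (hp₁ : p ≤ 1) (m : ℕ) :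
    ∑ t ∈ range m, ((t : ℝ) + 1) ^ (p - 1) ≤ (m : ℝ) ^ p / p := by
  rw [le_div_iff₀ hp₀, sum_mul]
  calc ∑ t ∈ range m, ((t : ℝ) + 1) ^ (p - 1) * p
      ≤ ∑ t ∈ range m, (((t + 1 : ℕ) : ℝ) ^ p - (t : ℝ) ^ p) := by
        gcongr with t
        rw [mul_comm]
        simpa using mul_rpow_sub_one_le_rpow_sub_rpow hp₀.le hp₁ (t := (t : ℝ) + 1) (by simp)
    _ = (m : ℝ) ^ p := by
        rw [sum_range_sub (fun t : ℕ => (t : ℝ) ^ p), Nat.cast_zero, zero_rpow hp₀.ne', sub_zero]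

theorem sum_natAbs_sub_le_two_mul_sum_range {n : ℕ} {g : ℕ → ℝ} (hg : ∀ t, 0 ≤ g t) (i : Fin n) :
    ∑ j : Fin n, g ((i : ℤ) - j).natAbs ≤ 2 * ∑ t ∈ range n, g t := by
  have half : ∀ S : Finset (Fin n), Set.InjOn (fun j : Fin n => ((i : ℤ) - j).natAbs) S →
      ∑ j ∈ S, g ((i : ℤ) - j).natAbs ≤ ∑ t ∈ range n, g t := fun S hS => by
    rw [← sum_image (f := g) hS]
    refine sum_le_sum_of_subset_of_nonneg ?_ fun t _ _ => hg t
    intro t ht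
    obtain ⟨j, -, rfl⟩ := mem_image.1 ht
    simp only [mem_range]
    omega
  rw [← sum_filter_add_sum_filter_not univ (fun j : Fin n => j ≤ i), two_mul]
  gcongr <;> refine half _ fun a ha b hb hab => ?_ <;>
    simp only [coe_filter, Set.mem_ofPred_eq, mem_univ, true_and] at ha hb hab <;>
    exact Fin.ext (by omega)

theorem sum_abs_toeplitz_le {K p : ℝ} (hK : 0 ≤ K) (hp₀ : 0 < p) (hp₁ : p ≤ 1) {c : ℤ → ℝ}
    (hc : ∀ t : ℤ, |c t| ≤ K * (1 + |(t : ℝ)|) ^ (p - 1)) {n : ℕ} (i : Fin n) :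
    ∑ j : Fin n, |c ((i : ℤ) - j)| ≤ 2 * K / p * (n : ℝ) ^ p := by
  calc ∑ j : Fin n, |c ((i : ℤ) - j)|
      ≤ ∑ j : Fin n, K * ((((i : ℤ) - j).natAbs : ℝ) + 1) ^ (p - 1) := by
        gcongr with j
        simpa [Nat.cast_natAbs, add_comm] using hc ((i : ℤ) - j)
    _ ≤ K * (2 * ((n : ℝ) ^ p / p)) := by
        rw [← mul_sum]
        gcongr
        exact (sum_natAbs_sub_le_two_mul_sum_range (g := fun t => ((t : ℝ) + 1) ^ (p - 1))
          (fun t => by positivity) i).trans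
          (by gcongr; exact Real.sum_range_add_one_rpow_sub_one_le hp₀ hp₁ n)
    _ = 2 * K / p * (n : ℝ) ^ p := by ring

theorem toeplitz_lrd_opNorm_bound_general (K H : ℝ)
    (hH : H ∈ Set.Ioo (1 / 2 : ℝ) 1) (c : ℤ → ℝ)
    (hc : ∀ t : ℤ, |c t| ≤ K * (1 + |(t : ℝ)|) ^ (2 * H - 2)) :
    ∃ K' > (0 : ℝ), ∀ n : ℕ, 1 ≤ n → ∀ Cm : Matrix (Fin n) (Fin n) ℝ,
      (∀ i j : Fin n, Cm i j = c ((i : ℤ) - (j : ℤ))) →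
      opNorm Cm ≤ K' * (n : ℝ) ^ (max (2 * H - 1) (1 / 2 : ℝ))
          * (1 + (if H = 3 / 4 then Real.log n else 0)) := by
  obtain ⟨hH₁, hH₂⟩ := hH
  have hp₀ : 0 < 2 * H - 1 := by linarith
  have hp₁ : 2 * H - 1 ≤ 1 := by linarith
  have hK : 0 ≤ K := by simpa using (abs_nonneg _).trans (hc 0)
  have hc' (t : ℤ) : |c t| ≤ K * (1 + |(t : ℝ)|) ^ (2 * H - 1 - 1) := by
    rw [sub_sub, one_add_one_eq_two]; exact hc t
  refine ⟨2 * K / (2 * H - 1) + 1, by positivity, fun n hn Cm hCm => ?_⟩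
  have hn₁ : (1 : ℝ) ≤ n := by exact_mod_cast hn
  set R := 2 * K / (2 * H - 1) * (n : ℝ) ^ (2 * H - 1)
  have hrow (i : Fin n) : ∑ j, |Cm i j| ≤ R := by
    simpa only [hCm] using sum_abs_toeplitz_le hK hp₀ hp₁ hc' i
  have hcol (j : Fin n) : ∑ i, |Cm i j| ≤ R := by
    simpa only [hCm, ← neg_sub (j : ℤ)] using
      sum_abs_toeplitz_le (c := fun t => c (-t)) hK hp₀ hp₁ (by simpa using fun t => hc' (-t)) j
  have hlog : 0 ≤ (if H = 3 / 4 then Real.log n else 0) := by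
    split_ifs
    exacts [Real.log_nonneg hn₁, le_rfl]
  calc opNorm Cm ≤ √(R * R) := opNorm_le_sqrt_of_sum_abs_le Cm (by positivity) hrow hcol
    _ = R := Real.sqrt_mul_self (by positivity)
    _ ≤ (2 * K / (2 * H - 1) + 1) * (n : ℝ) ^ (max (2 * H - 1) (1 / 2 : ℝ)) :=
        mul_le_mul (by linarith) (Real.rpow_le_rpow_of_exponent_le hn₁ (le_max_left _ _))
          (by positivity) (by positivity)
    _ ≤ _ := le_mul_of_one_le_right (by positivity) (by linarith)

/-- For a symmetric Toeplitz matrix `C(i,j) = c(i-j)` with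
`|c(t)| ≤ K (1+|t|)^{2H-2}` for some `H ∈ (1/2,1)`, the operator norm satisfies
`‖C‖ ≤ K' n^{(2H-1) ∨ 1/2} (1 + log(n) 1_{H=3/4})` for a constant `K' = K'(K,H)`. -/
theorem toeplitz_lrd_opNorm_bound (K H : ℝ) (hK : 0 < K)
    (hH : H ∈ Set.Ioo (1 / 2 : ℝ) 1) (c : ℤ → ℝ)
    (hsym : ∀ t : ℤ, c (-t) = c t)
    (hc : ∀ t : ℤ, |c t| ≤ K * (1 + |(t : ℝ)|) ^ (2 * H - 2)) :
    ∃ K' > (0 : ℝ), ∀ n : ℕ, 1 ≤ n → ∀ Cm : Matrix (Fin n) (Fin n) ℝ,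
      (∀ i j : Fin n, Cm i j = c ((i : ℤ) - (j : ℤ))) →
      opNorm Cm ≤ K' * (n : ℝ) ^ (max (2 * H - 1) (1 / 2 : ℝ))
          * (1 + (if H = 3 / 4 then Real.log n else 0)) :=
  toeplitz_lrd_opNorm_bound_general K H hH c hc
end
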